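/- Let (x, ξ) ∈ ℝ⁴ × (ℝ⁴ \ {0}) and define the composed relation by declaring (x̃, ξ̃) related to (x, ξ) if C(x,ξ) ∩ C(x̃,ξ̃) ≠ ∅. Then: (1) if ξ is timelike, no (x̃, ξ̃) ∈ ℝ⁴ × (ℝ⁴ \ {0}) is related to (x,ξ); (2) if ξ is spacelike, the set of related points is exactly {(x, ξ)}; (3) if ξ is lightlike (then ξ₀ ≠ 0), the set of related points is exactly {((x⁰ + τ, x' − τ ξ'/ξ₀), ξ) : τ ∈ ℝ}, i.e. the translates of (x,ξ) along the null line μ(τ) = (x⁰ + τ, x' − τ ξ₀^{−1} ξ'). -/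

import Mathlib

/-!
A common point of `C(x,ξ)` and `C(x̃,ξ̃)` forces `ξ̃ = ξ` and a direction `v ∈ S¹_ξ` with
`x̃' − x' = (x̃⁰ − x⁰) v` and `(x̃⁰ − x⁰)(ξ' − (ξ'·v) v) = 0`. The circle `S¹_ξ` is nonempty
exactly when `|ξ₀| ≤ |ξ'|`, and `|ξ' − (ξ'·v) v|² = |ξ'|² − ξ₀²`: in the spacelike case this
vector is nonzero, so `x̃ = x`; in the lightlike case it vanishes, `ξ' = −ξ₀ v` pins down `v`,
and `x̃⁰ − x⁰` is free.
-/

open MeasureTheory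
open scoped Real

noncomputable section

/-- Euclidean `ℝ³`. -/
abbrev E3 := EuclideanSpace ℝ (Fin 3)

/-- Minkowski space `ℝ⁴ = ℝ × ℝ³`, points written `x = (x⁰, x')`. -/
abbrev M4 := ℝ × E3

/-- The unit sphere `S² ⊆ ℝ³`. -/
def sphere2 : Set E3 := Metric.sphere 0 1

/-- The lightlike direction `θ = (1, v) ∈ ℝ⁴` as a 4-vector of components. -/
def thvec (v : E3) : Fin 4 → ℝ := Fin.cons 1 (fun i => v i)

/-- The components `(ξ₀, ξ')` of a covector as a 4-vector. -/
def xiVec (ξ : M4) : Fin 4 → ℝ := Fin.cons ξ.1 (fun i => ξ.2 i)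

/-- The Minkowski metric `η = diag(-1,1,1,1)` (its own inverse). -/
def eta4 : Fin 4 → Fin 4 → ℝ := fun i j => if i = j then (if i = 0 then -1 else 1) else 0

/-- The circle `S¹_ξ = {v ∈ S² : ξ₀ + ξ'·v = 0}`. -/
def S1xi (ξ : M4) : Set E3 := {v | ‖v‖ = 1 ∧ ξ.1 + (inner ℝ ξ.2 v : ℝ) = 0}

/-- `C(x,ξ)`: the set of `(y, v, η, w)` in relation `Z'` with `(x, ξ)`, i.e. `v ∈ S²`,
`y = x' − x⁰v`, `η = ξ'`, `w = x⁰(ξ' − (ξ'·v)v)` and `ξ₀ = −ξ'·v`. -/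
def Crel (x ξ : M4) : Set (E3 × E3 × E3 × E3) :=
  {q | ‖q.2.1‖ = 1 ∧
    q.1 = x.2 - x.1 • q.2.1 ∧
    q.2.2.1 = ξ.2 ∧
    q.2.2.2 = x.1 • (ξ.2 - (inner ℝ ξ.2 q.2.1 : ℝ) • q.2.1) ∧
    ξ.1 = -(inner ℝ ξ.2 q.2.1 : ℝ)}

open scoped RealInnerProductSpace

section InnerProductSpace

variable {E : Type*} [NormedAddCommGroup E] [InnerProductSpace ℝ E]

theorem norm_sub_inner_smul_sq {v : E} (hv : ‖v‖ = 1) (a : E) :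
    ‖a - ⟪a, v⟫ • v‖ ^ 2 = ‖a‖ ^ 2 - ⟪a, v⟫ ^ 2 := by
  rw [norm_sub_sq_real, real_inner_smul_right, norm_smul, Real.norm_eq_abs, hv, mul_one, sq_abs]
  ring

theorem eq_smul_of_norm_eq_abs_inner {v : E} (hv : ‖v‖ = 1) {a : E} (ha : ‖a‖ = |⟪a, v⟫|) :
    a = ⟪a, v⟫ • v := by
  have h := norm_sub_inner_smul_sq hv a
  rw [ha, sq_abs, sub_self, sq_eq_zero_iff, norm_eq_zero, sub_eq_zero] at h
  exact h

/-- Intermediate value theorem for `v ↦ ⟪a, v⟫` on the connected unit sphere, between `∓ a / ‖a‖`. -/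
theorem exists_norm_eq_one_inner_eq (hE : 1 < Module.rank ℝ E) (a : E) {t : ℝ}
    (ht : |t| ≤ ‖a‖) : ∃ v : E, ‖v‖ = 1 ∧ ⟪a, v⟫ = t := by
  have hS := isConnected_sphere hE (0 : E) zero_le_one
  by_cases ha : a = 0
  · obtain ⟨v, hv⟩ := hS.nonempty
    subst ha
    have ht0 : t = 0 := abs_nonpos_iff.mp (by simpa using ht)
    exact ⟨v, by simpa using hv, by simp [ht0]⟩
  set u := ‖a‖⁻¹ • a
  have hu : ‖u‖ = 1 := by simp [u, norm_smul, ha]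
  have hau : ⟪a, u⟫ = ‖a‖ := by
    rw [real_inner_smul_right, real_inner_self_eq_norm_sq]
    field_simp
  obtain ⟨v, hv, hvt⟩ := hS.isPreconnected.intermediate_value
    (mem_sphere_zero_iff_norm.mpr ((norm_neg u).trans hu)) (mem_sphere_zero_iff_norm.mpr hu)
    (continuous_const.inner continuous_id).continuousOn
    (show t ∈ Set.Icc ⟪a, -u⟫ ⟪a, u⟫ by rw [inner_neg_right, hau]; exact abs_le.mp ht)
  exact ⟨v, by simpa using hv, hvt⟩

end InnerProductSpace

theorem abs_fst_le_norm_snd_of_mem_s1xi {ξ : M4} {v : E3} (hv : v ∈ S1xi ξ) :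
    |ξ.1| ≤ ‖ξ.2‖ := by
  obtain ⟨hv1, hξv⟩ := hv
  rw [eq_neg_of_add_eq_zero_left hξv, abs_neg]
  simpa [hv1] using abs_real_inner_le_norm ξ.2 v

theorem s1xi_nonempty_iff (ξ : M4) : (S1xi ξ).Nonempty ↔ |ξ.1| ≤ ‖ξ.2‖ := by
  refine ⟨fun ⟨v, hv⟩ => abs_fst_le_norm_snd_of_mem_s1xi hv, fun h => ?_⟩
  have hrank : 1 < Module.rank ℝ E3 := by
    rw [← Module.finrank_eq_rank, finrank_euclideanSpace_fin]; norm_num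
  obtain ⟨v, hv, hξv⟩ := exists_norm_eq_one_inner_eq hrank ξ.2 (t := -ξ.1) (by rwa [abs_neg])
  exact ⟨v, hv, by rw [hξv]; ring⟩

theorem snd_eq_neg_fst_smul_of_mem_s1xi {ξ : M4} (h : |ξ.1| = ‖ξ.2‖) {v : E3}
    (hv : v ∈ S1xi ξ) : ξ.2 = (-ξ.1) • v := by
  have hξv : ⟪ξ.2, v⟫ = -ξ.1 := by linarith [hv.2]
  rw [← hξv]
  exact eq_smul_of_norm_eq_abs_inner hv.1 (by rw [hξv, abs_neg, h])

theorem fst_ne_zero_of_lightlike {ξ : M4} (hξ : ξ ≠ 0) (h : |ξ.1| = ‖ξ.2‖) : ξ.1 ≠ 0 := by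
  intro h0
  rw [h0, abs_zero, eq_comm, norm_eq_zero] at h
  exact hξ (Prod.ext h0 h)

theorem crel_inter_nonempty_iff (x ξ x' ξ' : M4) :
    (Crel x ξ ∩ Crel x' ξ').Nonempty ↔ ξ' = ξ ∧ ∃ v ∈ S1xi ξ,
      x'.2 - x.2 = (x'.1 - x.1) • v ∧ (x'.1 - x.1) • (ξ.2 - ⟪ξ.2, v⟫ • v) = 0 := by
  constructor
  · rintro ⟨⟨y, v, η, w⟩, ⟨hv, hy, hη, hw, hξv⟩, ⟨-, hy', hη', hw', hξv'⟩⟩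
    dsimp only at *
    have hsnd : ξ'.2 = ξ.2 := hη'.symm.trans hη
    refine ⟨Prod.ext (by rw [hξv, hξv', hsnd]) hsnd, v, ⟨hv, by rw [hξv]; ring⟩, ?_, ?_⟩
    · linear_combination (norm := module) hy'.symm.trans hy
    · rw [sub_smul, ← hw, hw', hsnd, sub_self]
  · rintro ⟨hξ', v, ⟨hv, hξv⟩, hy, hw⟩
    subst ξ'
    refine ⟨(x.2 - x.1 • v, v, ξ.2, x.1 • (ξ.2 - ⟪ξ.2, v⟫ • v)),
      ⟨hv, rfl, rfl, rfl, by linarith⟩, ⟨hv, ?_, rfl, ?_, by linarith⟩⟩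
    · linear_combination (norm := module) -hy
    · linear_combination (norm := module) -hw

theorem not_crel_inter_nonempty_of_timelike {x ξ : M4} (h : ‖ξ.2‖ < |ξ.1|) (x' ξ' : M4) :
    ¬ (Crel x ξ ∩ Crel x' ξ').Nonempty := by
  rw [crel_inter_nonempty_iff]
  rintro ⟨-, v, hv, -⟩
  exact (abs_fst_le_norm_snd_of_mem_s1xi hv).not_gt h

theorem crel_inter_nonempty_iff_of_spacelike {x ξ : M4} (h : |ξ.1| < ‖ξ.2‖) (x' ξ' : M4) :
    (Crel x ξ ∩ Crel x' ξ').Nonempty ↔ x' = x ∧ ξ' = ξ := by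
  rw [crel_inter_nonempty_iff]
  constructor
  · rintro ⟨hξ', v, hv, hy, hw⟩
    have hproj : ξ.2 - ⟪ξ.2, v⟫ • v ≠ 0 := by
      have hξv : ⟪ξ.2, v⟫ = -ξ.1 := by linarith [hv.2]
      have hsq : 0 < ‖ξ.2 - ⟪ξ.2, v⟫ • v‖ ^ 2 := by
        rw [norm_sub_inner_smul_sq hv.1, hξv, neg_sq, ← sq_abs ξ.1, sub_pos]
        exact pow_lt_pow_left₀ h (abs_nonneg _) two_ne_zero
      intro h0
      simp [h0] at hsq
    have hfst : x'.1 - x.1 = 0 := (smul_eq_zero.mp hw).resolve_right hproj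
    rw [hfst, zero_smul, sub_eq_zero] at hy
    exact ⟨Prod.ext (sub_eq_zero.mp hfst) hy, hξ'⟩
  · rintro ⟨rfl, rfl⟩
    obtain ⟨v, hv⟩ := (s1xi_nonempty_iff ξ').mpr h.le
    exact ⟨rfl, v, hv, by simp, by simp⟩

theorem crel_inter_nonempty_iff_of_lightlike {x ξ : M4} (h : |ξ.1| = ‖ξ.2‖) (h0 : ξ.1 ≠ 0)
    (x' ξ' : M4) : (Crel x ξ ∩ Crel x' ξ').Nonempty ↔
      ∃ τ : ℝ, x' = (x.1 + τ, x.2 - (τ / ξ.1) • ξ.2) ∧ ξ' = ξ := by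
  have hscale {v : E3} (hv : v ∈ S1xi ξ) (τ : ℝ) : (τ / ξ.1) • ξ.2 = -(τ • v) := by
    rw [snd_eq_neg_fst_smul_of_mem_s1xi h hv, smul_smul, mul_neg, div_mul_cancel₀ τ h0, neg_smul]
  rw [crel_inter_nonempty_iff]
  constructor
  · rintro ⟨hξ', v, hv, hy, -⟩
    refine ⟨x'.1 - x.1, Prod.ext (by simp) ?_, hξ'⟩
    dsimp only
    rw [hscale hv, sub_neg_eq_add, ← hy, add_sub_cancel]
  · rintro ⟨τ, rfl, hξ'⟩
    subst ξ'
    obtain ⟨v, hv⟩ := (s1xi_nonempty_iff ξ).mpr h.le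
    have hξv : ⟪ξ.2, v⟫ = -ξ.1 := by linarith [hv.2]
    refine ⟨rfl, v, hv, ?_, ?_⟩
    · simp only [hscale hv, add_sub_cancel_left]
      abel
    · rw [hξv, ← snd_eq_neg_fst_smul_of_mem_s1xi h hv, sub_self, smul_zero]

/-- The composed relation: `(x̃, ξ̃)` is related to `(x, ξ)` iff
`C(x,ξ) ∩ C(x̃,ξ̃) ≠ ∅`.  For timelike `ξ` nothing is related to `(x,ξ)`; for spacelike `ξ`
only `(x,ξ)` itself; for lightlike `ξ` exactly the translates of `(x,ξ)` along the null
line `μ(τ) = (x⁰ + τ, x' − τ ξ₀⁻¹ ξ')`. -/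
theorem composed_relation_characterization (x ξ : M4) (hξ : ξ ≠ 0) :
    (‖ξ.2‖ < |ξ.1| → ∀ (x' ξ' : M4), ξ' ≠ 0 → ¬ (Crel x ξ ∩ Crel x' ξ').Nonempty) ∧
    (|ξ.1| < ‖ξ.2‖ → ∀ (x' ξ' : M4), ξ' ≠ 0 →
      ((Crel x ξ ∩ Crel x' ξ').Nonempty ↔ x' = x ∧ ξ' = ξ)) ∧
    (|ξ.1| = ‖ξ.2‖ → ξ.1 ≠ 0 ∧ ∀ (x' ξ' : M4), ξ' ≠ 0 →
      ((Crel x ξ ∩ Crel x' ξ').Nonempty ↔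
        ∃ τ : ℝ, x' = (x.1 + τ, x.2 - (τ / ξ.1) • ξ.2) ∧ ξ' = ξ)) := by
  refine ⟨fun h x' ξ' _ => not_crel_inter_nonempty_of_timelike h x' ξ',
    fun h x' ξ' _ => crel_inter_nonempty_iff_of_spacelike h x' ξ', fun h => ?_⟩
  have h0 := fst_ne_zero_of_lightlike hξ h
  exact ⟨h0, fun x' ξ' _ => crel_inter_nonempty_iff_of_lightlike h h0 x' ξ'⟩
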